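/- arXiv:1802.00915 — 2 statements merged into one kernel-verified Lean document; each statement's English description precedes it below -/
import Mathlib

section
/- Define erfc(t) = (2/√π) ∫_t^∞ e^{−s²} ds. Then for every t ≥ 0, (1/√π) ∫_0^t (t−s)^{−1/2} e^s · erfc(√s) ds = 1 − e^t · erfc(√t). -/
/-!
Write `I` for the Riemann–Liouville integral of order `1/2` from `0`. Differentiating
`s ↦ √π e^b erfc √(b - s)` gives `I exp t = e^t (1 - erfc √t)`, that is
`e^s erfc √s = e^s - I exp s`. Since `I ∘ I` is plain integration from `0` (by Fubini and the
beta integral `∫_r^t (t - s)^{-1/2} (s - r)^{-1/2} ds = π`, obtained from the antiderivative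
`2 arcsin √((s - r)/(t - r))`), the left-hand side is
`I exp t - I (I exp) t = e^t (1 - erfc √t) - (e^t - 1) = 1 - e^t erfc √t`.
-/

open MeasureTheory intervalIntegral

noncomputable def erfc (t : ℝ) : ℝ :=
  (2 / Real.sqrt Real.pi) * ∫ s in Set.Ioi t, Real.exp (-s ^ 2)

open Real Set

/- Mathlib's `x ^ y` for `x < 0` is `exp (y log x) * cos (y π)`, which vanishes at `y = -1/2`;
so the kernels `(t - s) ^ (-1/2) * (s - r) ^ (-1/2)` below vanish automatically unless
`r < s < t`. -/
lemma Real.rpow_neg_half_of_nonpos {x : ℝ} (hx : x ≤ 0) : x ^ (-(1 / 2) : ℝ) = 0 := by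
  rcases hx.lt_or_eq with hx | rfl
  · rw [rpow_def_of_neg hx, show -(1 / 2) * π = -(π / 2) by ring, cos_neg, cos_pi_div_two,
      mul_zero]
  · exact zero_rpow (by norm_num)

lemma Real.rpow_neg_half_nonneg (x : ℝ) : 0 ≤ x ^ (-(1 / 2) : ℝ) := by
  rcases le_total x 0 with hx | hx
  · exact (rpow_neg_half_of_nonpos hx).ge
  · exact rpow_nonneg hx _

lemma integrable_gaussian : Integrable fun u : ℝ => exp (-u ^ 2) := by
  simpa using integrable_exp_neg_mul_sq one_pos

lemma erfc_eq_one_sub (x : ℝ) : erfc x = 1 - 2 / √π * ∫ u in (0 : ℝ)..x, exp (-u ^ 2) := by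
  have hsplit := integral_Ioi_sub_Ioi' (a := 0) (b := x) integrable_gaussian.integrableOn
    integrable_gaussian.integrableOn
  have hpi : √π ≠ 0 := by positivity
  rw [erfc, ← hsplit, show ∫ u in Ioi (0 : ℝ), exp (-u ^ 2) = √π / 2 by
    simpa using integral_gaussian_Ioi 1]
  field_simp
  ring

lemma erfc_zero : erfc 0 = 1 := by simp [erfc_eq_one_sub]

lemma hasDerivAt_erfc (x : ℝ) : HasDerivAt erfc (-(2 / √π) * exp (-x ^ 2)) x := by
  have hcont : Continuous fun u : ℝ => exp (-u ^ 2) := by fun_prop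
  have := (integral_hasDerivAt_right (hcont.intervalIntegrable 0 x)
    (hcont.stronglyMeasurableAtFilter _ _) hcont.continuousAt).const_mul (2 / √π) |>.const_sub 1
  simpa [funext erfc_eq_one_sub] using this

lemma continuous_erfc : Continuous erfc :=
  continuous_iff_continuousAt.2 fun x => (hasDerivAt_erfc x).continuousAt

noncomputable def riemannLiouvilleHalf (f : ℝ → ℝ) (t : ℝ) : ℝ :=
  1 / √π * ∫ s in (0 : ℝ)..t, (t - s) ^ (-(1 / 2) : ℝ) * f s

lemma hasDerivAt_exp_mul_erfc_sqrt_sub {b s : ℝ} (hs : s < b) :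
    HasDerivAt (fun s => √π * exp b * erfc √(b - s))
      ((b - s) ^ (-(1 / 2) : ℝ) * exp s) s := by
  have hbs : 0 < b - s := sub_pos.2 hs
  have hsqrt : HasDerivAt (fun s => √(b - s)) (1 / (2 * √(b - s)) * (-1)) s :=
    (hasDerivAt_sqrt hbs.ne').comp s ((hasDerivAt_id s).const_sub b)
  refine (((hasDerivAt_erfc _).comp s hsqrt).const_mul (√π * exp b)).congr_deriv ?_
  have hpi : √π ≠ 0 := by positivity
  have hroot : √(b - s) ≠ 0 := (sqrt_pos.2 hbs).ne'
  rw [sq_sqrt hbs.le, rpow_neg hbs.le, ← sqrt_eq_rpow, exp_neg, exp_sub]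
  field_simp

lemma continuous_exp_mul_erfc_sqrt_sub (b : ℝ) :
    Continuous fun s => √π * exp b * erfc √(b - s) := by
  have := continuous_erfc
  fun_prop

lemma intervalIntegrable_rpow_neg_half_mul_exp {a b : ℝ} (hab : a ≤ b) :
    IntervalIntegrable (fun s => (b - s) ^ (-(1 / 2) : ℝ) * exp s) volume a b :=
  (intervalIntegrable_iff_integrableOn_Ioc_of_le hab).2 <|
    integrableOn_deriv_of_nonneg (continuous_exp_mul_erfc_sqrt_sub b).continuousOn
      (fun _ hs => hasDerivAt_exp_mul_erfc_sqrt_sub hs.2)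
      fun s _ => mul_nonneg (rpow_neg_half_nonneg _) (exp_pos s).le

lemma integral_rpow_neg_half_mul_exp {a b : ℝ} (hab : a ≤ b) :
    ∫ s in a..b, (b - s) ^ (-(1 / 2) : ℝ) * exp s = √π * exp b * (1 - erfc √(b - a)) := by
  rw [integral_eq_sub_of_hasDerivAt_of_le hab (continuous_exp_mul_erfc_sqrt_sub b).continuousOn
    (fun _ hs => hasDerivAt_exp_mul_erfc_sqrt_sub hs.2)
    (intervalIntegrable_rpow_neg_half_mul_exp hab), sub_self, sqrt_zero, erfc_zero]
  ring

lemma riemannLiouvilleHalf_exp {t : ℝ} (ht : 0 ≤ t) :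
    riemannLiouvilleHalf exp t = exp t * (1 - erfc √t) := by
  have hpi : √π ≠ 0 := by positivity
  rw [riemannLiouvilleHalf, integral_rpow_neg_half_mul_exp ht, sub_zero]
  field_simp

lemma rpow_neg_half_mul_rpow_neg_half_eq_zero {r s t : ℝ} (hs : s ∉ Ioo r t) :
    (t - s) ^ (-(1 / 2) : ℝ) * (s - r) ^ (-(1 / 2) : ℝ) = 0 := by
  rcases not_and_or.1 hs with hrs | hst
  · exact mul_eq_zero_of_right _ (rpow_neg_half_of_nonpos (by linarith [not_lt.1 hrs]))
  · exact mul_eq_zero_of_left (rpow_neg_half_of_nonpos (by linarith [not_lt.1 hst])) _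

lemma hasDerivAt_two_mul_arcsin_sqrt {r s t : ℝ} (hs : s ∈ Ioo r t) :
    HasDerivAt (fun s => 2 * arcsin √((s - r) / (t - r)))
      ((t - s) ^ (-(1 / 2) : ℝ) * (s - r) ^ (-(1 / 2) : ℝ)) s := by
  obtain ⟨hrs, hst⟩ := hs
  have htr : 0 < t - r := by linarith
  have hsr : 0 < s - r := by linarith
  have hts : 0 < t - s := by linarith
  have hx : 0 < (s - r) / (t - r) := div_pos hsr htr
  have hx1 : (s - r) / (t - r) < 1 := (div_lt_one htr).2 (by linarith)
  have hsqrt : HasDerivAt (fun s => √((s - r) / (t - r)))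
      (1 / (2 * √((s - r) / (t - r))) * (1 / (t - r))) s :=
    (hasDerivAt_sqrt hx.ne').comp s (((hasDerivAt_id s).sub_const r).div_const (t - r))
  have hsqrt1 : √((s - r) / (t - r)) ≠ 1 := by rw [Ne, sqrt_eq_one]; exact hx1.ne
  have hsqrt_neg : √((s - r) / (t - r)) ≠ -1 := by linarith [sqrt_nonneg ((s - r) / (t - r))]
  refine (((hasDerivAt_arcsin hsqrt_neg hsqrt1).comp s hsqrt).const_mul 2).congr_deriv ?_
  have h1x : 1 - (s - r) / (t - r) = (t - s) / (t - r) := by field_simp; ring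
  rw [sq_sqrt hx.le, h1x, rpow_neg hts.le, rpow_neg hsr.le, ← sqrt_eq_rpow, ← sqrt_eq_rpow,
    sqrt_div hts.le, sqrt_div hsr.le]
  have hroot_ts := (sqrt_pos.2 hts).ne'
  have hroot_sr := (sqrt_pos.2 hsr).ne'
  have hroot_tr := (sqrt_pos.2 htr).ne'
  field_simp
  rw [sq_sqrt htr.le]

lemma continuous_two_mul_arcsin_sqrt (r t : ℝ) :
    Continuous fun s => 2 * arcsin √((s - r) / (t - r)) := by
  fun_prop

lemma integrable_rpow_neg_half_mul_rpow_neg_half (r t : ℝ) :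
    Integrable fun s => (t - s) ^ (-(1 / 2) : ℝ) * (s - r) ^ (-(1 / 2) : ℝ) := by
  refine IntegrableOn.integrable_of_forall_notMem_eq_zero (s := Ioc r t) ?_ fun s hs =>
    rpow_neg_half_mul_rpow_neg_half_eq_zero fun h => hs (Ioo_subset_Ioc_self h)
  exact integrableOn_deriv_of_nonneg (continuous_two_mul_arcsin_sqrt r t).continuousOn
    (fun _ hs => hasDerivAt_two_mul_arcsin_sqrt hs)
    fun _ _ => mul_nonneg (rpow_neg_half_nonneg _) (rpow_neg_half_nonneg _)

lemma integral_rpow_neg_half_mul_rpow_neg_half {r t : ℝ} (hrt : r < t) :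
    ∫ s, (t - s) ^ (-(1 / 2) : ℝ) * (s - r) ^ (-(1 / 2) : ℝ) = π := by
  rw [← setIntegral_eq_integral_of_forall_compl_eq_zero (s := Ioc r t) fun s hs =>
    rpow_neg_half_mul_rpow_neg_half_eq_zero fun h => hs (Ioo_subset_Ioc_self h),
    ← integral_of_le hrt.le, integral_eq_sub_of_hasDerivAt_of_le hrt.le
      (continuous_two_mul_arcsin_sqrt r t).continuousOn
      (fun _ hs => hasDerivAt_two_mul_arcsin_sqrt hs)
      (integrable_rpow_neg_half_mul_rpow_neg_half r t).intervalIntegrable,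
    div_self (sub_pos.2 hrt).ne']
  simp only [sub_self, zero_div, sqrt_zero, arcsin_zero, sqrt_one, arcsin_one]
  ring

section Composition

variable {f : ℝ → ℝ} {t : ℝ}

lemma integral_Ioo_rpow_neg_half_mul_eq_riemannLiouvilleHalf {s : ℝ} (hs : 0 ≤ s)
    (hst : s ≤ t) :
    ∫ r in Ioo 0 t, (s - r) ^ (-(1 / 2) : ℝ) * f r = √π * riemannLiouvilleHalf f s := by
  have hpi : √π ≠ 0 := by positivity
  rw [setIntegral_eq_of_subset_of_forall_sdiff_eq_zero measurableSet_Ioo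
      (Ioo_subset_Ioo_right hst) fun r hr => mul_eq_zero_of_left (rpow_neg_half_of_nonpos
        (sub_nonpos.2 (not_lt.1 fun h => hr.2 ⟨hr.1.1, h⟩))) _,
    riemannLiouvilleHalf, integral_of_le hs, integral_Ioc_eq_integral_Ioo]
  field_simp

lemma integral_Ioo_rpow_neg_half_mul_of_nonpos {s : ℝ} (hs : s ≤ 0) :
    ∫ r in Ioo 0 t, (s - r) ^ (-(1 / 2) : ℝ) * f r = 0 :=
  setIntegral_eq_zero_of_forall_eq_zero fun r hr =>
    mul_eq_zero_of_left (rpow_neg_half_of_nonpos (by linarith [hr.1])) _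

lemma integral_Ioo_rpow_neg_half_mul_rpow_neg_half_mul (s : ℝ) :
    ∫ r in Ioo 0 t, (t - s) ^ (-(1 / 2) : ℝ) * (s - r) ^ (-(1 / 2) : ℝ) * f r
      = (Ioc 0 t).indicator
          (fun s => √π * ((t - s) ^ (-(1 / 2) : ℝ) * riemannLiouvilleHalf f s)) s := by
  simp_rw [mul_assoc]
  rw [MeasureTheory.integral_const_mul]
  by_cases hs : s ∈ Ioc 0 t
  · rw [indicator_of_mem hs, integral_Ioo_rpow_neg_half_mul_eq_riemannLiouvilleHalf hs.1.le hs.2]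
    ring
  · rw [indicator_of_notMem hs]
    rcases not_and_or.1 hs with hs | hs
    · rw [integral_Ioo_rpow_neg_half_mul_of_nonpos (not_lt.1 hs), mul_zero]
    · rw [rpow_neg_half_of_nonpos (by linarith [not_le.1 hs]), zero_mul]

lemma integrable_prod_rpow_neg_half_mul_rpow_neg_half_mul (hf : IntegrableOn f (Ioo 0 t)) :
    Integrable
      (fun p : ℝ × ℝ => (t - p.1) ^ (-(1 / 2) : ℝ) * (p.1 - p.2) ^ (-(1 / 2) : ℝ) * f p.2)
      (volume.prod (volume.restrict (Ioo 0 t))) := by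
  have hmeas : Measurable fun p : ℝ × ℝ =>
      (t - p.1) ^ (-(1 / 2) : ℝ) * (p.1 - p.2) ^ (-(1 / 2) : ℝ) := by
    fun_prop
  refine (integrable_prod_iff' ?_).2 ⟨?_, ?_⟩
  · exact hmeas.aestronglyMeasurable.mul hf.aestronglyMeasurable.comp_snd
  · exact Filter.Eventually.of_forall fun r =>
      (integrable_rpow_neg_half_mul_rpow_neg_half r t).mul_const (f r)
  · refine (hf.norm.const_mul π).congr ?_
    filter_upwards [ae_restrict_mem measurableSet_Ioo] with r hr
    simp_rw [norm_mul, norm_of_nonneg (rpow_neg_half_nonneg _)]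
    rw [MeasureTheory.integral_mul_const, integral_rpow_neg_half_mul_rpow_neg_half hr.2]

lemma intervalIntegrable_rpow_neg_half_mul_riemannLiouvilleHalf (hf : IntegrableOn f (Ioo 0 t))
    (ht : 0 ≤ t) :
    IntervalIntegrable (fun s => (t - s) ^ (-(1 / 2) : ℝ) * riemannLiouvilleHalf f s)
      volume 0 t := by
  have h := (integrable_prod_rpow_neg_half_mul_rpow_neg_half_mul hf).integral_prod_left
  simp only [integral_Ioo_rpow_neg_half_mul_rpow_neg_half_mul,
    integrable_indicator_iff measurableSet_Ioc] at h
  rw [intervalIntegrable_iff_integrableOn_Ioc_of_le ht]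
  exact (integrable_const_mul_iff (isUnit_iff_ne_zero.2 (by positivity)) _).1 h

lemma riemannLiouvilleHalf_riemannLiouvilleHalf (hf : IntegrableOn f (Ioo 0 t)) (ht : 0 ≤ t) :
    riemannLiouvilleHalf (riemannLiouvilleHalf f) t = ∫ r in (0 : ℝ)..t, f r := by
  have hfubini :
      √π * ∫ s in (0 : ℝ)..t, (t - s) ^ (-(1 / 2) : ℝ) * riemannLiouvilleHalf f s
        = π * ∫ r in (0 : ℝ)..t, f r := calc
    _ = ∫ s, (Ioc 0 t).indicator
          (fun s => √π * ((t - s) ^ (-(1 / 2) : ℝ) * riemannLiouvilleHalf f s)) s := by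
      rw [MeasureTheory.integral_indicator measurableSet_Ioc, integral_of_le ht,
        MeasureTheory.integral_const_mul]
    _ = ∫ s, ∫ r in Ioo 0 t, (t - s) ^ (-(1 / 2) : ℝ) * (s - r) ^ (-(1 / 2) : ℝ) * f r := by
      simp_rw [integral_Ioo_rpow_neg_half_mul_rpow_neg_half_mul]
    _ = ∫ r in Ioo 0 t, ∫ s, (t - s) ^ (-(1 / 2) : ℝ) * (s - r) ^ (-(1 / 2) : ℝ) * f r :=
      integral_integral_swap (integrable_prod_rpow_neg_half_mul_rpow_neg_half_mul hf)
    _ = ∫ r in Ioo 0 t, π * f r := setIntegral_congr_fun measurableSet_Ioo fun r hr => by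
      rw [MeasureTheory.integral_mul_const, integral_rpow_neg_half_mul_rpow_neg_half hr.2]
    _ = π * ∫ r in (0 : ℝ)..t, f r := by
      rw [MeasureTheory.integral_const_mul, integral_of_le ht, integral_Ioc_eq_integral_Ioo]
  have hpi : √π ≠ 0 := by positivity
  have hinner : ∫ s in (0 : ℝ)..t, (t - s) ^ (-(1 / 2) : ℝ) * riemannLiouvilleHalf f s
      = √π * ∫ r in (0 : ℝ)..t, f r := by
    rw [← mul_right_inj' hpi, hfubini, ← mul_assoc, mul_self_sqrt pi_pos.le]
  rw [riemannLiouvilleHalf, hinner]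
  field_simp

end Composition

/-- Closed-form evaluation of the order-`1/2` Riemann–Liouville fractional integral of
`s ↦ e^s erfc(√s)`:
`(1/√π) ∫_0^t (t−s)^{−1/2} e^s erfc(√s) ds = 1 − e^t erfc(√t)` for all `t ≥ 0`. -/
theorem integral_example53 :
    ∀ t : ℝ, 0 ≤ t →
      (1 / Real.sqrt Real.pi)
          * (∫ s in (0:ℝ)..t, (t - s) ^ (-(1/2) : ℝ) * (Real.exp s * erfc (Real.sqrt s)))
        = 1 - Real.exp t * erfc (Real.sqrt t) := by
  intro t ht
  have hdecomp : ∀ s ∈ uIcc 0 t, (t - s) ^ (-(1 / 2) : ℝ) * (exp s * erfc √s)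
      = (t - s) ^ (-(1 / 2) : ℝ) * exp s
        - (t - s) ^ (-(1 / 2) : ℝ) * riemannLiouvilleHalf exp s := by
    intro s hs
    rw [riemannLiouvilleHalf_exp (uIcc_of_le ht ▸ hs).1]
    ring
  have hexp : IntegrableOn exp (Ioo 0 t) :=
    continuous_exp.integrableOn_Icc.mono_set Ioo_subset_Icc_self
  rw [integral_congr hdecomp, integral_sub (intervalIntegrable_rpow_neg_half_mul_exp ht)
    (intervalIntegrable_rpow_neg_half_mul_riemannLiouvilleHalf hexp ht), mul_sub]
  change riemannLiouvilleHalf exp t - riemannLiouvilleHalf (riemannLiouvilleHalf exp) t = _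
  rw [riemannLiouvilleHalf_exp ht, riemannLiouvilleHalf_riemannLiouvilleHalf hexp ht,
    integral_exp, exp_zero]
  ring
end

section
/- Define erfc(t) = (2/√π) ∫_t^∞ e^{−s²} ds and y(t) = 1 − e^t · erfc(√t). Then y satisfies, for every t ∈ [0, 1], y(t) = −(1/Γ(0.5)) ∫_0^t (t−s)^{−1/2} y(s) ds + 2√(t/π). -/
/-!
Substituting `s = t - v²` removes the Abel kernel:
`∫₀ᵗ (t - s)^(-1/2) y(s) ds = 2 ∫₀^√t y(t - v²) dv`.
Writing `e^s erfc √s = e^s - (2/√π) e^s E(√s)` with `E(x) = ∫₀ˣ e^{-v²} dv`, everything then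
integrates in closed form except `∫₀^X e^{-v²} E(√(X² - v²)) dv` (`X = √t`), the Gaussian integral over the
quarter disc of radius `X`, which equals `π/4 (1 - e^{-X²})`. In the parametrisation
`v = X sin θ` the `X`-derivative of its integrand is an exact `θ`-derivative plus `X e^{-X²}`,
so the derivative of the quarter-disc integral is `π/2 · X e^{-X²}`.
-/

open MeasureTheory intervalIntegral

open Real Set

noncomputable def gaussPrimitive (x : ℝ) : ℝ := ∫ v in (0 : ℝ)..x, exp (-v ^ 2)

lemma hasDerivAt_gaussPrimitive (x : ℝ) : HasDerivAt gaussPrimitive (exp (-x ^ 2)) x :=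
  (Continuous.integral_hasStrictDerivAt (by fun_prop) 0 x).hasDerivAt

@[fun_prop]
lemma continuous_gaussPrimitive : Continuous gaussPrimitive :=
  continuous_iff_continuousAt.2 fun x => (hasDerivAt_gaussPrimitive x).continuousAt

@[simp]
lemma gaussPrimitive_zero : gaussPrimitive 0 = 0 := integral_same

lemma erfc_eq_one_sub_gaussPrimitive (x : ℝ) : erfc x = 1 - 2 / √π * gaussPrimitive x := by
  have hint (a : ℝ) : IntegrableOn (fun s : ℝ => exp (-s ^ 2)) (Ioi a) := by
    simpa using (integrable_exp_neg_mul_sq one_pos).integrableOn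
  have hgauss : ∫ s in Ioi (0 : ℝ), exp (-s ^ 2) = √π / 2 := by
    simpa using integral_gaussian_Ioi 1
  have htail : ∫ s in Ioi x, exp (-s ^ 2) = √π / 2 - gaussPrimitive x := by
    rw [gaussPrimitive, ← integral_Ioi_sub_Ioi' (hint 0) (hint x), hgauss, sub_sub_cancel]
  rw [erfc, htail]
  field_simp

theorem hasDerivAt_intervalIntegral_of_continuous {E : Type*} [NormedAddCommGroup E]
    [NormedSpace ℝ E] {F F' : ℝ → ℝ → E} (hF : ∀ x, Continuous (F x))
    (hF' : Continuous (Function.uncurry F')) (hderiv : ∀ x t, HasDerivAt (F · t) (F' x t) x)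
    (a b x₀ : ℝ) :
    HasDerivAt (fun x => ∫ t in a..b, F x t) (∫ t in a..b, F' x₀ t) x₀ := by
  obtain ⟨C, hC⟩ := ((isCompact_closedBall x₀ 1).prod
    (isCompact_uIcc (a := a) (b := b))).exists_bound_of_continuousOn hF'.continuousOn
  exact (hasDerivAt_integral_of_dominated_loc_of_deriv_le (bound := fun _ => C)
    (Metric.closedBall_mem_nhds x₀ one_pos)
    (Filter.Eventually.of_forall fun x => (hF x).aestronglyMeasurable)
    ((hF x₀).intervalIntegrable a b)
    (hF'.comp (Continuous.prodMk_right x₀)).aestronglyMeasurable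
    (ae_of_all _ fun t ht x hx => hC (x, t) ⟨hx, uIoc_subset_uIcc ht⟩)
    intervalIntegrable_const (ae_of_all _ fun t _ x _ => hderiv x t)).2

theorem integral_rpow_neg_half_mul_eq (φ : ℝ → ℝ) {X : ℝ} (hX : 0 ≤ X) :
    ∫ s in (0 : ℝ)..X ^ 2, (X ^ 2 - s) ^ (-(1 / 2) : ℝ) * φ s =
      ∫ v in (0 : ℝ)..X, 2 * φ (X ^ 2 - v ^ 2) := by
  have hsubst := integral_comp_mul_deriv_of_deriv_nonpos (a := 0) (b := X)
    (f := fun v => X ^ 2 - v ^ 2) (f' := fun v => -(2 * v))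
    (g := fun s => (X ^ 2 - s) ^ (-(1 / 2) : ℝ) * φ s) (by fun_prop)
    (fun v _ => by simpa using (hasDerivAt_pow 2 v).const_sub (X ^ 2))
    (fun v hv => by
      simp only [min_eq_left hX, max_eq_right hX] at hv
      linarith [hv.1])
  simp only [Function.comp_def, sub_self, ne_eq, OfNat.ofNat_ne_zero, not_false_eq_true,
    zero_pow, sub_zero] at hsubst
  rw [integral_symm, ← hsubst, ← intervalIntegral.integral_neg]
  refine integral_congr_ae (ae_of_all _ fun v hv => ?_)
  rw [uIoc_of_le hX] at hv
  rw [sub_sub_cancel, rpow_neg (sq_nonneg v), ← sqrt_eq_rpow, sqrt_sq hv.1.le]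
  field_simp [hv.1.ne']

/-- `∬ e^{-v²-w²}` over the quarter disc `v, w ≥ 0, v² + w² ≤ x²`, as the integral over
`v = x sin θ` of `e^{-v²} ∫₀^{x cos θ} e^{-w²} dw`. -/
noncomputable def gaussQuarterDisk (x : ℝ) : ℝ :=
  ∫ θ in (0 : ℝ)..π / 2, x * cos θ * exp (-(x * sin θ) ^ 2) * gaussPrimitive (x * cos θ)

lemma exp_neg_sq_mul_sin_mul_exp_neg_sq_mul_cos (x θ : ℝ) :
    exp (-(x * sin θ) ^ 2) * exp (-(x * cos θ) ^ 2) = exp (-x ^ 2) := by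
  rw [← exp_add]
  congr 1
  linear_combination (-x ^ 2) * sin_sq_add_cos_sq θ

lemma hasDerivAt_gaussQuarterDisk (x : ℝ) :
    HasDerivAt gaussQuarterDisk (π / 2 * (x * exp (-x ^ 2))) x := by
  let H (x θ : ℝ) : ℝ := sin θ * exp (-(x * sin θ) ^ 2) * gaussPrimitive (x * cos θ)
  let H' (x θ : ℝ) : ℝ := cos θ * exp (-(x * sin θ) ^ 2) * gaussPrimitive (x * cos θ) *
    (1 - 2 * x ^ 2 * sin θ ^ 2) - x * sin θ ^ 2 * exp (-x ^ 2)
  have hH (x θ : ℝ) : HasDerivAt (H x) (H' x θ) θ := by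
    refine (((hasDerivAt_sin θ).mul (((hasDerivAt_sin θ).const_mul x).pow 2).neg.exp).mul
      ((hasDerivAt_gaussPrimitive _).comp θ ((hasDerivAt_cos θ).const_mul x))).congr_deriv ?_
    simp only [H', Pi.mul_apply, Pi.pow_apply, Pi.neg_apply, Function.comp_apply]
    rw [← exp_neg_sq_mul_sin_mul_exp_neg_sq_mul_cos x θ]
    ring
  have hF (x θ : ℝ) : HasDerivAt (fun x => x * cos θ * exp (-(x * sin θ) ^ 2) *
      gaussPrimitive (x * cos θ)) (H' x θ + x * exp (-x ^ 2)) x := by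
    refine ((((hasDerivAt_id x).mul_const (cos θ)).mul
      (((hasDerivAt_id x).mul_const (sin θ)).pow 2).neg.exp).mul
      ((hasDerivAt_gaussPrimitive _).comp x ((hasDerivAt_id x).mul_const (cos θ)))).congr_deriv ?_
    simp only [H', Pi.mul_apply, Pi.pow_apply, Pi.neg_apply, Function.comp_apply, id]
    rw [← exp_neg_sq_mul_sin_mul_exp_neg_sq_mul_cos x θ]
    linear_combination (x * exp (-(x * sin θ) ^ 2) * exp (-(x * cos θ) ^ 2)) *
      sin_sq_add_cos_sq θ
  refine (hasDerivAt_intervalIntegral_of_continuous (fun x => by fun_prop) (by fun_prop) hF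
    0 (π / 2) x).congr_deriv ?_
  have hH'_int : IntervalIntegrable (H' x) volume 0 (π / 2) :=
    (by fun_prop : Continuous (H' x)).intervalIntegrable _ _
  rw [intervalIntegral.integral_add hH'_int intervalIntegrable_const,
    integral_eq_sub_of_hasDerivAt (fun θ _ => hH x θ) hH'_int]
  simp [H]
  ring

lemma gaussQuarterDisk_eq (x : ℝ) : gaussQuarterDisk x = π / 4 * (1 - exp (-x ^ 2)) := by
  have hderiv (x : ℝ) :
      HasDerivAt (fun x => gaussQuarterDisk x - π / 4 * (1 - exp (-x ^ 2))) 0 x := by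
    refine ((hasDerivAt_gaussQuarterDisk x).sub
      (((hasDerivAt_pow 2 x).neg.exp.const_sub 1).const_mul (π / 4))).congr_deriv ?_
    simp only [Pi.neg_apply]
    push_cast
    ring
  have := is_const_of_deriv_eq_zero (fun x => (hderiv x).differentiableAt)
    (fun x => (hderiv x).deriv) x 0
  simpa [gaussQuarterDisk, sub_eq_zero] using this

lemma integral_exp_mul_gaussPrimitive_sqrt {X : ℝ} (hX : 0 ≤ X) :
    ∫ v in (0 : ℝ)..X, exp (-v ^ 2) * gaussPrimitive √(X ^ 2 - v ^ 2) = gaussQuarterDisk X := by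
  have h := integral_comp_mul_deriv (a := 0) (b := π / 2) (f := fun θ => X * sin θ)
    (f' := fun θ => X * cos θ) (g := fun v => exp (-v ^ 2) * gaussPrimitive √(X ^ 2 - v ^ 2))
    (fun θ _ => (hasDerivAt_sin θ).const_mul X) (by fun_prop) (by fun_prop)
  simp only [sin_zero, sin_pi_div_two, mul_zero, mul_one, Function.comp_def] at h
  rw [← h, gaussQuarterDisk]
  refine integral_congr fun θ hθ => ?_
  rw [uIcc_of_le (by positivity)] at hθ
  have hcos : 0 ≤ X * cos θ :=
    mul_nonneg hX (cos_nonneg_of_mem_Icc ⟨by linarith [hθ.1, pi_pos], hθ.2⟩)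
  have hsq : X ^ 2 - (X * sin θ) ^ 2 = (X * cos θ) ^ 2 := by
    linear_combination (-X ^ 2) * sin_sq_add_cos_sq θ
  simp only [hsq, sqrt_sq hcos]
  ring

lemma integral_one_sub_exp_mul_erfc_sqrt {X : ℝ} (hX : 0 ≤ X) :
    ∫ v in (0 : ℝ)..X, 2 * (1 - exp (X ^ 2 - v ^ 2) * erfc √(X ^ 2 - v ^ 2)) =
      2 * X - 2 * exp (X ^ 2) * gaussPrimitive X + √π * (exp (X ^ 2) - 1) := by
  have hexpand (v : ℝ) : 2 * (1 - exp (X ^ 2 - v ^ 2) * erfc √(X ^ 2 - v ^ 2)) =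
      2 - 2 * exp (X ^ 2) * exp (-v ^ 2) +
        4 / √π * exp (X ^ 2) * (exp (-v ^ 2) * gaussPrimitive √(X ^ 2 - v ^ 2)) := by
    rw [erfc_eq_one_sub_gaussPrimitive, sub_eq_add_neg (X ^ 2), exp_add]
    ring
  simp_rw [hexpand]
  rw [intervalIntegral.integral_add (Continuous.intervalIntegrable (by fun_prop) _ _)
      (Continuous.intervalIntegrable (by fun_prop) _ _),
    intervalIntegral.integral_sub intervalIntegrable_const
      (Continuous.intervalIntegrable (by fun_prop) _ _),
    intervalIntegral.integral_const_mul, intervalIntegral.integral_const_mul,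
    integral_exp_mul_gaussPrimitive_sqrt hX, gaussQuarterDisk_eq, intervalIntegral.integral_const,
    ← gaussPrimitive, exp_neg]
  have hπ : √π ≠ 0 := by positivity
  field_simp
  simp only [sub_zero, smul_eq_mul]
  linear_combination (1 - exp (X ^ 2)) * mul_self_sqrt pi_pos.le

/-- The function `y(t) = 1 − e^t erfc(√t)` is the exact solution of the fractional
integral equation of Example 5.3. -/
theorem example53_exact_solution
    (y : ℝ → ℝ) (hy : ∀ t : ℝ, y t = 1 - Real.exp t * erfc (Real.sqrt t)) :
    ∀ t ∈ Set.Icc (0:ℝ) 1,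
      y t = -(1 / Real.Gamma 0.5) * (∫ s in (0:ℝ)..t, (t - s) ^ (-(1/2) : ℝ) * y s)
            + 2 * Real.sqrt (t / Real.pi) := by
  rintro t ⟨ht, -⟩
  obtain ⟨X, hX, rfl⟩ : ∃ X, 0 ≤ X ∧ t = X ^ 2 := ⟨√t, sqrt_nonneg t, (sq_sqrt ht).symm⟩
  rw [integral_rpow_neg_half_mul_eq y hX]
  simp only [hy]
  rw [integral_one_sub_exp_mul_erfc_sqrt hX, erfc_eq_one_sub_gaussPrimitive, sqrt_sq hX,
    show (0.5 : ℝ) = 1 / 2 by norm_num, Gamma_one_half_eq, sqrt_div (sq_nonneg X), sqrt_sq hX]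
  have hπ : √π ≠ 0 := by positivity
  field_simp
  ring
end
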